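/- If μ and ν are computable probability measures on Cantor space and ρ = (μ+ν)/2, then a sequence X is Martin-Löf random with respect to ρ if and only if X is Martin-Löf random with respect to μ or with respect to ν. -/

import Mathlib

open MeasureTheory Filter

/-- Cantor space `2^ω`. -/
abbrev Cantor : Type := ℕ → Bool

/-- The first `n` bits of a sequence, as a finite binary string. -/
def pref (X : Cantor) (n : ℕ) : List Bool := List.ofFn fun i : Fin n => X i

/-- The basic open (cylinder) set determined by a finite string `σ`. -/
def cyl (σ : List Bool) : Set Cantor := {X | pref X σ.length = σ}

/-- Partial recursiveness relative to an oracle `O : ℕ → ℕ`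
(the clauses of `Nat.Partrec` plus an oracle clause). -/
inductive RecIn (O : ℕ → ℕ) : (ℕ →. ℕ) → Prop
  | zero : RecIn O (pure 0)
  | succ : RecIn O Nat.succ
  | left : RecIn O ↑fun n : ℕ => n.unpair.1
  | right : RecIn O ↑fun n : ℕ => n.unpair.2
  | oracle : RecIn O ↑O
  | pair {f g} : RecIn O f → RecIn O g → RecIn O fun n => Nat.pair <$> f n <*> g n
  | comp {f g} : RecIn O f → RecIn O g → RecIn O fun n => g n >>= f
  | prec {f g} : RecIn O f → RecIn O g → RecIn O (Nat.unpaired fun a n =>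
      n.rec (f a) fun y IH => do let i ← IH; g (Nat.pair a (Nat.pair y i)))
  | rfind {f} : RecIn O f →
      RecIn O fun a => Nat.rfind fun n => (fun m => m = 0) <$> f (Nat.pair a n)

/-- `f` is computable relative to the oracle `A ∈ 2^ω`. -/
def OracleComputableIn (A : Cantor) {α β : Type} [Primcodable α] [Primcodable β]
    (f : α → β) : Prop :=
  RecIn (fun n => (A n).toNat) fun n =>
    Part.bind (Part.ofOption (Encodable.decode (α := α) n)) fun a =>
      Part.some (Encodable.encode (f a))

/-- `X ∈ 2^ω` is a computable sequence. -/
def ComputableSeq (X : Cantor) : Prop := Computable X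

/-- A computable real: one with a computable sequence of rational approximations. -/
def ComputableReal (r : ℝ) : Prop :=
  ∃ q : ℕ → ℚ, Computable q ∧ ∀ n, |r - (q n : ℝ)| ≤ (2 : ℝ)⁻¹ ^ n

/-- A computable probability measure on Cantor space: the measures of cylinders are
uniformly computable reals. -/
def ComputableMeasure (μ : Measure Cantor) : Prop :=
  IsProbabilityMeasure μ ∧
    ∃ q : List Bool → ℕ → ℚ, Computable₂ q ∧
      ∀ σ n, |(μ (cyl σ)).toReal - (q σ n : ℝ)| ≤ (2 : ℝ)⁻¹ ^ n

/-- A uniformly effectively open sequence of classes: each `U i` is the union of a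
computable enumeration of cylinders. -/
def EffOpen (U : ℕ → Set Cantor) : Prop :=
  ∃ f : ℕ → ℕ → Option (List Bool), Computable₂ f ∧
    ∀ i, U i = ⋃ n : ℕ, Option.elim (f i n) ∅ cyl

/-- A uniformly `A`-effectively open sequence of classes. -/
def EffOpenIn (A : Cantor) (U : ℕ → Set Cantor) : Prop :=
  ∃ f : ℕ → ℕ → Option (List Bool), OracleComputableIn A (fun p : ℕ × ℕ => f p.1 p.2) ∧
    ∀ i, U i = ⋃ n : ℕ, Option.elim (f i n) ∅ cyl

/-- A `μ`-Martin-Löf test. -/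
def MLTest (μ : Measure Cantor) (U : ℕ → Set Cantor) : Prop :=
  EffOpen U ∧ ∀ i, μ (U i) ≤ (2 : ENNReal)⁻¹ ^ i

/-- `X` is `μ`-Martin-Löf random. -/
def MLRandom (μ : Measure Cantor) (X : Cantor) : Prop :=
  ∀ U : ℕ → Set Cantor, MLTest μ U → X ∉ ⋂ i, U i

/-- A `μ`-Martin-Löf test relative to the oracle `A`. -/
def MLTestIn (A : Cantor) (μ : Measure Cantor) (U : ℕ → Set Cantor) : Prop :=
  EffOpenIn A U ∧ ∀ i, μ (U i) ≤ (2 : ENNReal)⁻¹ ^ i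

/-- `X` is `μ`-Martin-Löf random relative to the oracle `A`. -/
def MLRandomIn (A : Cantor) (μ : Measure Cantor) (X : Cantor) : Prop :=
  ∀ U : ℕ → Set Cantor, MLTestIn A μ U → X ∉ ⋂ i, U i

/-- A `μ`-Schnorr test: a Martin-Löf test whose levels have measure exactly `2⁻ⁱ`. -/
def SchnorrTest (μ : Measure Cantor) (U : ℕ → Set Cantor) : Prop :=
  EffOpen U ∧ ∀ i, μ (U i) = (2 : ENNReal)⁻¹ ^ i

/-- `X` is `μ`-Schnorr random. -/
def SchnorrRandom (μ : Measure Cantor) (X : Cantor) : Prop :=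
  ∀ U : ℕ → Set Cantor, SchnorrTest μ U → X ∉ ⋂ i, U i

/-- The set of atoms of `μ`. -/
def Atoms (μ : Measure Cantor) : Set Cantor := {X | 0 < μ {X}}

/-- `lam` is the uniform (Lebesgue) measure on Cantor space. -/
def IsLebesgue (lam : Measure Cantor) : Prop :=
  ∀ σ : List Bool, lam (cyl σ) = (2 : ENNReal)⁻¹ ^ σ.length

/-- A total (truth-table) functional: every output bit is a computable function of a
computably bounded finite initial segment of the input. -/
def TTFunctional (Φ : Cantor → Cantor) : Prop :=
  ∃ (u : ℕ → ℕ) (g : List Bool → ℕ → Bool), Computable u ∧ Computable₂ g ∧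
    ∀ X n, Φ X n = g (pref X (u n)) n

/-- `B` is a Δ⁰₂ sequence: it has a uniformly computable approximation converging
pointwise to it. -/
def Delta02 (B : Cantor) : Prop :=
  ∃ Bs : ℕ → Cantor, Computable₂ (fun s n => Bs s n) ∧
    ∀ n, ∃ N, ∀ s, N ≤ s → Bs s n = B n

/-- `theta As X n` is the least stage `s` with `X↾n = As s↾n`, and `⊤ = +∞` if there
is no such stage. -/
noncomputable def theta (As : ℕ → Cantor) (X : Cantor) (n : ℕ) : ℕ∞ :=
  sInf {e : ℕ∞ | ∃ s : ℕ, e = (s : ℕ∞) ∧ pref X n = pref (As s) n}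

open Classical in
/-- The tally functional determined by the approximation `As`: the output is
`1^{θ(X,0)} 0 1^{θ(X,1)} 0 ⋯`, continuing with `1^ω` as soon as some `θ(X,n) = +∞`
(position `k` is a `0` exactly when `k = θ(X,0) + ⋯ + θ(X,m) + m` for some `m`). -/
noncomputable def tally (As : ℕ → Cantor) (X : Cantor) : Cantor := fun k =>
  if ∃ m : ℕ, (k : ℕ∞) = (∑ i ∈ Finset.range (m + 1), theta As X i) + (m : ℕ∞)
    then false else true

/-- The join `A ⊕ B` of two sequences. -/
def join (A B : Cantor) : Cantor := fun k => if k % 2 = 0 then A (k / 2) else B (k / 2)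

/-!
Since `μ ≤ 2ρ` and `ν ≤ 2ρ`, dropping the first level of a `ρ`-test gives both a `μ`-test and a
`ν`-test, so randomness for `μ` or for `ν` implies randomness for `ρ`. Conversely, if `X` fails a
`μ`-test `(Uᵢ)` and a `ν`-test `(Vᵢ)`, it fails `(Uᵢ ∩ Vᵢ)`, which is a `ρ`-test because
`ρ(Uᵢ ∩ Vᵢ) ≤ (μ(Uᵢ) + ν(Vᵢ))/2 ≤ 2⁻ⁱ`; it stays effectively open because the intersection of two
cylinders is empty or one of them, which can be decided from the two strings.
-/

lemma length_pref (X : Cantor) (n : ℕ) : (pref X n).length = n := by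
  simp [pref]

lemma take_pref (X : Cantor) {n m : ℕ} (h : n ≤ m) : (pref X m).take n = pref X n := by
  apply List.ext_getElem
  · simp [length_pref, h]
  · intro i _ hi
    simp [pref]

lemma pref_prefix_pref (X : Cantor) {n m : ℕ} (h : n ≤ m) : pref X n <+: pref X m :=
  List.prefix_iff_eq_take.mpr (by rw [length_pref, take_pref X h])

lemma cyl_subset_cyl {σ τ : List Bool} (h : σ <+: τ) : cyl τ ⊆ cyl σ := by
  intro X (hX : pref X τ.length = τ)
  calc pref X σ.length = (pref X τ.length).take σ.length := (take_pref X h.length_le).symm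
    _ = σ := by rw [hX, ← List.prefix_iff_eq_take.mp h]

lemma prefix_or_prefix_of_mem_cyl {σ τ : List Bool} {X : Cantor} (hσ : X ∈ cyl σ)
    (hτ : X ∈ cyl τ) : σ <+: τ ∨ τ <+: σ := by
  have hσ' : pref X σ.length = σ := hσ
  have hτ' : pref X τ.length = τ := hτ
  rcases le_total σ.length τ.length with h | h
  · left
    simpa only [hσ', hτ'] using pref_prefix_pref X h
  · right
    simpa only [hσ', hτ'] using pref_prefix_pref X h

def cylInter (σ τ : List Bool) : Option (List Bool) :=
  if τ.take σ.length = σ then some τ else if σ.take τ.length = τ then some σ else none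

lemma elim_cylInter (σ τ : List Bool) : (cylInter σ τ).elim ∅ cyl = cyl σ ∩ cyl τ := by
  unfold cylInter
  split_ifs with hστ hτσ
  · exact (Set.inter_eq_right.mpr (cyl_subset_cyl (List.prefix_iff_eq_take.mpr hστ.symm))).symm
  · exact (Set.inter_eq_left.mpr (cyl_subset_cyl (List.prefix_iff_eq_take.mpr hτσ.symm))).symm
  · refine (Set.eq_empty_of_forall_notMem fun X hX => ?_).symm
    rcases prefix_or_prefix_of_mem_cyl hX.1 hX.2 with h | h
    · exact hστ (List.prefix_iff_eq_take.mp h).symm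
    · exact hτσ (List.prefix_iff_eq_take.mp h).symm

lemma primrec_cylInter : Primrec₂ cylInter := by
  have hστ : PrimrecPred fun p : List Bool × List Bool => p.2.take p.1.length = p.1 :=
    Primrec.eq.comp (Primrec.list_take.comp (Primrec.list_length.comp .fst) .snd) .fst
  have hτσ : PrimrecPred fun p : List Bool × List Bool => p.1.take p.2.length = p.2 :=
    Primrec.eq.comp (Primrec.list_take.comp (Primrec.list_length.comp .snd) .fst) .snd
  exact Primrec.ite hστ (Primrec.option_some.comp .snd)
    (Primrec.ite hτσ (Primrec.option_some.comp .fst) (Primrec.const none))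

lemma elim_bind_cylInter (a b : Option (List Bool)) :
    (a.bind fun σ => b.bind (cylInter σ)).elim ∅ cyl = a.elim ∅ cyl ∩ b.elim ∅ cyl := by
  cases a <;> cases b <;> simp [elim_cylInter]

theorem EffOpen.comp {U : ℕ → Set Cantor} (hU : EffOpen U) {k : ℕ → ℕ} (hk : Computable k) :
    EffOpen fun i => U (k i) := by
  obtain ⟨f, hf, hUf⟩ := hU
  exact ⟨fun i n => f (k i) n, hf.comp (hk.comp .fst) .snd, fun i => hUf (k i)⟩

theorem EffOpen.inter {U V : ℕ → Set Cantor} (hU : EffOpen U) (hV : EffOpen V) :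
    EffOpen fun i => U i ∩ V i := by
  obtain ⟨f, hf, hUf⟩ := hU
  obtain ⟨g, hg, hVg⟩ := hV
  refine ⟨fun i n => (f i n.unpair.1).bind fun σ => (g i n.unpair.2).bind (cylInter σ),
    ?_, fun i => ?_⟩
  · have hfst : Computable fun p : ℕ × ℕ => f p.1 p.2.unpair.1 :=
      hf.comp .fst (Computable.fst.comp (Computable.unpair.comp .snd))
    have hsnd : Computable fun p : ℕ × ℕ => g p.1 p.2.unpair.2 :=
      hg.comp .fst (Computable.snd.comp (Computable.unpair.comp .snd))
    exact hfst.option_bind (Computable.option_bind (hsnd.comp .fst)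
      (primrec_cylInter.to_comp.comp (Computable.snd.comp .fst) .snd))
  · simp only [elim_bind_cylInter, hUf, hVg, Set.iUnion_inter_iUnion]
    exact (Set.iUnion_unpair fun m n => (f i m).elim ∅ cyl ∩ (g i n).elim ∅ cyl).symm

lemma half_smul_add_apply (μ ν : Measure Cantor) (S : Set Cantor) :
    ((2 : ENNReal)⁻¹ • (μ + ν)) S = 2⁻¹ * (μ S + ν S) := by
  simp [Measure.smul_apply, Measure.add_apply, smul_eq_mul, mul_add]

lemma le_two_smul_half_smul_add (μ ν : Measure Cantor) :
    μ ≤ (2 : ENNReal) ^ 1 • (2 : ENNReal)⁻¹ • (μ + ν) := by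
  rw [smul_smul, pow_one, ENNReal.mul_inv_cancel two_ne_zero ENNReal.ofNat_ne_top, one_smul]
  exact Measure.le_add_right le_rfl

theorem MLTest.shift_of_le_two_pow_smul {μ ρ : Measure Cantor} {U : ℕ → Set Cantor} (k : ℕ)
    (hμ : μ ≤ (2 : ENNReal) ^ k • ρ) (hU : MLTest ρ U) : MLTest μ fun i => U (i + k) := by
  refine ⟨hU.1.comp (Primrec.nat_add.to_comp.comp .id (.const k)), fun i => ?_⟩
  calc μ (U (i + k)) ≤ 2 ^ k * ρ (U (i + k)) := hμ _
    _ ≤ 2 ^ k * 2⁻¹ ^ (i + k) := by gcongr; exact hU.2 _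
    _ = 2⁻¹ ^ i := by
      rw [pow_add, mul_left_comm, ← mul_pow,
        ENNReal.mul_inv_cancel two_ne_zero ENNReal.ofNat_ne_top, one_pow, mul_one]

theorem MLTest.inter_half_smul_add {μ ν : Measure Cantor} {U V : ℕ → Set Cantor}
    (hU : MLTest μ U) (hV : MLTest ν V) :
    MLTest ((2 : ENNReal)⁻¹ • (μ + ν)) fun i => U i ∩ V i := by
  refine ⟨hU.1.inter hV.1, fun i => ?_⟩
  calc ((2 : ENNReal)⁻¹ • (μ + ν)) (U i ∩ V i) = 2⁻¹ * (μ (U i ∩ V i) + ν (U i ∩ V i)) :=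
        half_smul_add_apply μ ν _
    _ ≤ 2⁻¹ * (2⁻¹ ^ i + 2⁻¹ ^ i) := by
        gcongr
        exacts [(measure_mono Set.inter_subset_left).trans (hU.2 i),
          (measure_mono Set.inter_subset_right).trans (hV.2 i)]
    _ = 2⁻¹ ^ i := by
        rw [← two_mul, ← mul_assoc, ENNReal.inv_mul_cancel two_ne_zero ENNReal.ofNat_ne_top,
          one_mul]

theorem MLRandom.of_le_two_pow_smul {μ ρ : Measure Cantor} {X : Cantor} (k : ℕ)
    (hμ : μ ≤ (2 : ENNReal) ^ k • ρ) (hX : MLRandom μ X) : MLRandom ρ X := fun _ hU hXU =>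
  hX _ (hU.shift_of_le_two_pow_smul k hμ) (Set.mem_iInter.mpr fun _ => Set.mem_iInter.mp hXU _)

theorem MLRandom.or_of_half_smul_add {μ ν : Measure Cantor} {X : Cantor}
    (hX : MLRandom ((2 : ENNReal)⁻¹ • (μ + ν)) X) : MLRandom μ X ∨ MLRandom ν X := by
  by_contra! ⟨hμ, hν⟩
  simp only [MLRandom, not_forall, not_not] at hμ hν
  obtain ⟨U, hU, hXU⟩ := hμ
  obtain ⟨V, hV, hXV⟩ := hν
  exact hX _ (hU.inter_half_smul_add hV) (Set.mem_iInter.mpr fun i =>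
    ⟨Set.mem_iInter.mp hXU i, Set.mem_iInter.mp hXV i⟩)

theorem stmt0_general (μ ν : Measure Cantor) (X : Cantor) :
    MLRandom ((2 : ENNReal)⁻¹ • (μ + ν)) X ↔ MLRandom μ X ∨ MLRandom ν X := by
  refine ⟨MLRandom.or_of_half_smul_add, fun h => h.elim ?_ ?_⟩
  · exact MLRandom.of_le_two_pow_smul 1 (le_two_smul_half_smul_add μ ν)
  · rw [add_comm μ ν]
    exact MLRandom.of_le_two_pow_smul 1 (le_two_smul_half_smul_add ν μ)

/-- If `μ` and `ν` are computable probability measures and `ρ = (μ+ν)/2`, then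
`MLR_ρ = MLR_μ ∪ MLR_ν`. -/
theorem stmt0 (μ ν : Measure Cantor) (hμ : ComputableMeasure μ) (hν : ComputableMeasure ν)
    (X : Cantor) :
    MLRandom ((2 : ENNReal)⁻¹ • (μ + ν)) X ↔ MLRandom μ X ∨ MLRandom ν X :=
  stmt0_general μ ν X
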